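/- Let M ⊆ ℂ be closed under the map (p,q) ↦ intersection of the line through p at angle α with the line through q at angle β, for all angles α, β in U = {0, π/n, 2π/n, ..., (n-1)π/n}, and suppose 0, 1 ∈ M. If cos(π/n) + i·sin(π/n) ∈ M then 2cos(π/n) ∈ M ∩ ℝ, and conversely if 2cos(π/n) ∈ M then cos(π/n) + i·sin(π/n) ∈ M. -/

import Mathlib

open Real Complex

/-!
The line through `0` in direction `0` and the line through `e^{iπ/n}` in direction `π - π/n`
meet at `2 cos (π/n)`; conversely, the line through `0` in direction `π/n` and the line through
`2 cos (π/n)` in direction `π - π/n` meet at `e^{iπ/n}`. The three directions are pairwise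
non-parallel because `n ≥ 3`.
-/

lemma natCast_pred_mul_pi_div {n : ℕ} (hn : n ≠ 0) :
    ((n - 1 : ℕ) : ℝ) * π / n = π - π / n := by
  rw [Nat.cast_pred (Nat.pos_of_ne_zero hn)]
  field_simp

lemma sin_sub_mul_pi_div_ne_zero {j k n : ℕ} (hjk : j < k) (hkn : k < n) :
    Real.sin ((k : ℝ) * π / n - (j : ℝ) * π / n) ≠ 0 := by
  have hn : (0 : ℝ) < n := Nat.cast_pos.mpr (by omega)
  have hdiff : (0 : ℝ) < k - j := sub_pos.mpr (by exact_mod_cast hjk)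
  have hlt : (k : ℝ) - j < n := by
    have : (k : ℝ) < n := by exact_mod_cast hkn
    linarith [(Nat.cast_nonneg j : (0 : ℝ) ≤ j)]
  rw [← sub_div, ← sub_mul]
  refine (Real.sin_pos_of_pos_of_lt_pi (div_pos (mul_pos hdiff Real.pi_pos) hn) ?_).ne'
  rw [div_lt_iff₀ hn, mul_comm]
  exact mul_lt_mul_of_pos_left hlt Real.pi_pos

theorem cos_point_mem_iff_two_cos_mem_general (n : ℕ) (hn : 3 ≤ n) (M : Set ℂ)
    (h0 : (0 : ℂ) ∈ M)
    (hclosed : ∀ j k : ℕ, j < n → k < n →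
      Real.sin ((k : ℝ) * π / n - (j : ℝ) * π / n) ≠ 0 →
      ∀ p ∈ M, ∀ q ∈ M, ∀ z : ℂ,
        (∃ r : ℝ, z = p + (r : ℂ) *
          (Real.cos ((j : ℝ) * π / n) + Real.sin ((j : ℝ) * π / n) * Complex.I)) →
        (∃ s : ℝ, z = q + (s : ℂ) *
          (Real.cos ((k : ℝ) * π / n) + Real.sin ((k : ℝ) * π / n) * Complex.I)) →
        z ∈ M) :
    ((Real.cos (π / n) + Real.sin (π / n) * Complex.I : ℂ) ∈ M →
      ((2 * Real.cos (π / n) : ℝ) : ℂ) ∈ M) ∧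
    (((2 * Real.cos (π / n) : ℝ) : ℂ) ∈ M →
      (Real.cos (π / n) + Real.sin (π / n) * Complex.I : ℂ) ∈ M) := by
  have hclosed' := fun j (hj : j < n - 1) =>
    hclosed j (n - 1) (by omega) (by omega) (sin_sub_mul_pi_div_ne_zero hj (by omega))
  simp only [natCast_pred_mul_pi_div (by omega : n ≠ 0), Real.cos_pi_sub, Real.sin_pi_sub]
    at hclosed'
  constructor
  · intro hcis
    refine hclosed' 0 (by omega) 0 h0 _ hcis _ ⟨2 * Real.cos (π / n), ?_⟩ ⟨-1, ?_⟩
    · simp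
    · push_cast; ring
  · intro htwocos
    refine hclosed' 1 (by omega) 0 h0 _ htwocos _ ⟨1, ?_⟩ ⟨1, ?_⟩
    · simp
    · push_cast; ring

theorem cos_point_mem_iff_two_cos_mem (n : ℕ) (hn : 3 ≤ n) (M : Set ℂ)
    (h0 : (0 : ℂ) ∈ M) (h1 : (1 : ℂ) ∈ M)
    (hclosed : ∀ j k : ℕ, j < n → k < n →
      Real.sin ((k : ℝ) * π / n - (j : ℝ) * π / n) ≠ 0 →
      ∀ p ∈ M, ∀ q ∈ M, ∀ z : ℂ,
        (∃ r : ℝ, z = p + (r : ℂ) *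
          (Real.cos ((j : ℝ) * π / n) + Real.sin ((j : ℝ) * π / n) * Complex.I)) →
        (∃ s : ℝ, z = q + (s : ℂ) *
          (Real.cos ((k : ℝ) * π / n) + Real.sin ((k : ℝ) * π / n) * Complex.I)) →
        z ∈ M) :
    ((Real.cos (π / n) + Real.sin (π / n) * Complex.I : ℂ) ∈ M →
      ((2 * Real.cos (π / n) : ℝ) : ℂ) ∈ M) ∧
    (((2 * Real.cos (π / n) : ℝ) : ℂ) ∈ M →
      (Real.cos (π / n) + Real.sin (π / n) * Complex.I : ℂ) ∈ M) :=
  cos_point_mem_iff_two_cos_mem_general n hn M h0 hclosed
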